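/- arXiv:2504.08733 — 2 statements merged into one kernel-verified Lean document; each statement's English description precedes it below -/
import Mathlib

section
/- For e ≥ 3, the rook's graph K_e □ K_e has exactly two spreads: the only partitions of its vertex set Fin e × Fin e into maximal cliques are the partition into rows and the partition into columns. -/
/-!
A clique of the rook's graph containing `p` lies in the row or in the column of `p`: a vertex
off the row of `p` and a vertex off the column of `p`, both adjacent to `p`, differ in both
coordinates. Hence the maximal cliques are exactly the rows and the columns. A spread cannot
mix the two kinds, since row `r` and column `c` share the vertex `(r, c)` without being equal;
and a cover of the vertices by rows only must use every row.
-/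

/-- The rook's graph `K_e □ K_e` (the Hamming graph `H(2, e)`). -/
def rookGraph (e : ℕ) : SimpleGraph (Fin e × Fin e) where
  Adj p q := (p.1 = q.1 ∧ p.2 ≠ q.2) ∨ (p.1 ≠ q.1 ∧ p.2 = q.2)
  symm := by
    constructor
    intro p q h
    rcases h with ⟨h1, h2⟩ | ⟨h1, h2⟩
    · exact Or.inl ⟨h1.symm, fun h => h2 h.symm⟩
    · exact Or.inr ⟨fun h => h1 h.symm, h2.symm⟩
  loopless := by
    constructor
    intro p h
    rcases h with ⟨_, h⟩ | ⟨h, _⟩ <;> exact h rfl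

lemma SimpleGraph.nonempty_of_maximal_isClique {V : Type*} [Nonempty V] {G : SimpleGraph V}
    {s : Set V} (hs : Maximal G.IsClique s) : s.Nonempty := by
  obtain ⟨v⟩ := ‹Nonempty V›
  rw [Set.nonempty_iff_ne_empty]
  rintro rfl
  exact hs.2 (G.isClique_singleton v) (Set.empty_subset _) rfl

lemma setOf_fst_eq_ne_setOf_snd_eq {α β : Type*} [Nontrivial β] (a : α) (b : β) :
    {p : α × β | p.1 = a} ≠ {p | p.2 = b} := by
  obtain ⟨b', hb'⟩ := exists_ne b
  intro h
  exact hb' (h ▸ rfl : (a, b') ∈ {p : α × β | p.2 = b})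

lemma eq_setOf_fibers_of_covers {α β : Type*} {f : α → β} (hf : Function.Surjective f)
    {P : Set (Set α)} (hfib : ∀ s ∈ P, ∃ b, s = {a | f a = b}) (hcover : ∀ a, ∃ s ∈ P, a ∈ s) :
    P = {s | ∃ b, s = {a | f a = b}} := by
  ext s
  refine ⟨hfib s, ?_⟩
  rintro ⟨b, rfl⟩
  obtain ⟨a, rfl⟩ := hf b
  obtain ⟨t, ht, hat⟩ := hcover a
  obtain ⟨b', rfl⟩ := hfib t ht
  rwa [show f a = b' from hat]

namespace rookGraph

variable {e : ℕ}

lemma isClique_row (r : Fin e) : (rookGraph e).IsClique {p | p.1 = r} := by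
  intro p hp q hq hpq
  exact Or.inl ⟨hp.trans hq.symm, fun h => hpq (Prod.ext (hp.trans hq.symm) h)⟩

lemma isClique_col (c : Fin e) : (rookGraph e).IsClique {p | p.2 = c} := by
  intro p hp q hq hpq
  exact Or.inr ⟨fun h => hpq (Prod.ext h (hp.trans hq.symm)), hp.trans hq.symm⟩

lemma isClique_subset_row_or_subset_col {s : Set (Fin e × Fin e)}
    (hs : (rookGraph e).IsClique s) {p : Fin e × Fin e} (hp : p ∈ s) :
    s ⊆ {q | q.1 = p.1} ∨ s ⊆ {q | q.2 = p.2} := by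
  by_contra! h
  obtain ⟨⟨a, ha, ha₁⟩, ⟨b, hb, hb₂⟩⟩ := And.imp Set.not_subset.mp Set.not_subset.mp h
  have ha₂ : a.2 = p.2 := by
    rcases hs ha hp (by rintro rfl; exact ha₁ rfl) with ⟨h, -⟩ | ⟨-, h⟩
    exacts [absurd h ha₁, h]
  have hb₁ : b.1 = p.1 := by
    rcases hs hb hp (by rintro rfl; exact hb₂ rfl) with ⟨h, -⟩ | ⟨-, h⟩
    exacts [h, absurd h hb₂]
  rcases hs ha hb (by rintro rfl; exact hb₂ ha₂) with ⟨h, -⟩ | ⟨-, h⟩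
  · exact ha₁ (h.trans hb₁)
  · exact hb₂ (h.symm.trans ha₂)

lemma eq_row_or_eq_col_of_maximal {s : Set (Fin e × Fin e)}
    (hs : Maximal (rookGraph e).IsClique s) {p : Fin e × Fin e} (hp : p ∈ s) :
    s = {q | q.1 = p.1} ∨ s = {q | q.2 = p.2} :=
  (isClique_subset_row_or_subset_col hs.1 hp).imp
    (fun h => hs.eq_of_le (isClique_row _) h) (fun h => hs.eq_of_le (isClique_col _) h)

end rookGraph

theorem rook_graph_two_spreads (e : ℕ) (he : 3 ≤ e)
    (P : Set (Set (Fin e × Fin e)))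
    (hclique : ∀ s ∈ P, (rookGraph e).IsClique s ∧
        ∀ t : Set (Fin e × Fin e), (rookGraph e).IsClique t → s ⊆ t → s = t)
    (hpart : ∀ v : Fin e × Fin e, ∃! s, s ∈ P ∧ v ∈ s) :
    P = {s : Set (Fin e × Fin e) | ∃ r : Fin e, s = {p | p.1 = r}} ∨
      P = {s : Set (Fin e × Fin e) | ∃ c : Fin e, s = {p | p.2 = c}} := by
  have : Nontrivial (Fin e) := Fin.nontrivial_iff_two_le.mpr (by omega)
  have hcover : ∀ v, ∃ s ∈ P, v ∈ s := fun v => (hpart v).exists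
  have hrow_or_col : ∀ s ∈ P, (∃ r, s = {p | p.1 = r}) ∨ ∃ c, s = {p | p.2 = c} := by
    intro s hs
    have hmax : Maximal (rookGraph e).IsClique s := maximal_iff.mpr (hclique s hs)
    obtain ⟨p, hp⟩ := SimpleGraph.nonempty_of_maximal_isClique hmax
    exact (rookGraph.eq_row_or_eq_col_of_maximal hmax hp).imp (⟨_, ·⟩) (⟨_, ·⟩)
  by_cases hrows : ∀ s ∈ P, ∃ r, s = {p | p.1 = r}
  · exact Or.inl (eq_setOf_fibers_of_covers Prod.fst_surjective hrows hcover)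
  obtain ⟨s, hs, hs_row⟩ := not_forall₂.mp hrows
  obtain ⟨c, rfl⟩ := (hrow_or_col s hs).resolve_left hs_row
  have hcols : ∀ t ∈ P, ∃ c', t = {p | p.2 = c'} := by
    refine fun t ht => (hrow_or_col t ht).resolve_left ?_
    rintro ⟨r, rfl⟩
    exact setOf_fst_eq_ne_setOf_snd_eq r c ((hpart (r, c)).unique ⟨ht, rfl⟩ ⟨hs, rfl⟩)
  exact Or.inr (eq_setOf_fibers_of_covers Prod.snd_surjective hcols hcover)
end

section
/- Let d and e be positive integers with d < e, let Y and Y' be the vertex sets of two copies of the Hamming graph H(d,e), and let G be a bipartite e-regular graph with parts Y and Y' such that for every vertex x ∈ Y the neighborhood of x in G is a maximal clique of the Hamming graph on Y', and for every vertex x' ∈ Y' the neighborhood of x' in G is a maximal clique of the Hamming graph on Y. Then every connected component of G is isomorphic to the complete bipartite graph K_{e,e}, and the two parts of each component are maximal cliques of the respective Hamming graphs. -/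
/-- The Hamming graph `H(d, e)`: tuples adjacent iff they differ in exactly
one coordinate. -/
def hammingGraph (d e : ℕ) : SimpleGraph (Fin d → Fin e) where
  Adj x y := (Finset.univ.filter fun i => x i ≠ y i).card = 1
  symm := by
    constructor
    intro x y h
    rw [show (Finset.univ.filter fun i => y i ≠ x i)
        = (Finset.univ.filter fun i => x i ≠ y i) from
      Finset.filter_congr fun i _ => by simp [ne_comm]]
    exact h
  loopless := by constructor; intro x h; simp at h

/-- `s` is a maximal clique of the graph `G`. -/
def IsMaximalClique {V : Type*} (G : SimpleGraph V) (s : Set V) : Prop :=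
  G.IsClique s ∧ ∀ t : Set V, G.IsClique t → s ⊆ t → s = t

/-!
A maximal clique of `H(d, e)` through a point `a` is a line `{y | ∀ j ≠ k, y j = a j}`, and two
distinct points lie on at most one line. Let `x ~ y` be an edge of `G`. The neighbourhood of `y` is
a line with `e` points, and the neighbourhood of each of them is a line through `y`; as there are
only `d < e` directions, two of these points `x₁ ≠ x₂` have the same neighbourhood `M`. Every
`w ∈ M` is then adjacent to `x₁` and `x₂`, so its neighbourhood is the line through them, namely
the neighbourhood of `y`. From this the adjacency relation between the two parts is difunctional
(`x ~ y`, `z ~ y`, `x ~ w` imply `z ~ w`), which is exactly saying that the components of `G` are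
complete bipartite graphs on a pair of neighbourhoods.
-/

open Function

section Hamming

variable {d e : ℕ}

def hammingLine (k : Fin d) (a : Fin d → Fin e) : Set (Fin d → Fin e) :=
  {y | ∀ j, j ≠ k → y j = a j}

lemma mem_hammingLine_self (k : Fin d) (a : Fin d → Fin e) : a ∈ hammingLine k a :=
  fun _ _ => rfl

lemma hammingGraph_adj_iff {x y : Fin d → Fin e} :
    (hammingGraph d e).Adj x y ↔ ∃ k, ∀ i, x i ≠ y i ↔ i = k := by
  simp [hammingGraph, Finset.card_eq_one, Finset.ext_iff]

lemma hammingLine_isClique (k : Fin d) (a : Fin d → Fin e) :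
    (hammingGraph d e).IsClique (hammingLine k a) := by
  intro p hp q hq hpq
  have hdiff : ∀ i, p i ≠ q i → i = k := fun i hi => by
    by_contra hik
    exact hi ((hp i hik).trans (hq i hik).symm)
  obtain ⟨i, hi⟩ := Function.ne_iff.mp hpq
  refine hammingGraph_adj_iff.mpr ⟨k, fun j => ⟨hdiff j, ?_⟩⟩
  rintro rfl
  exact hdiff i hi ▸ hi

lemma SimpleGraph.IsClique.subset_hammingLine {s : Set (Fin d → Fin e)}
    (hs : (hammingGraph d e).IsClique s) {p q : Fin d → Fin e} {k : Fin d}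
    (hp : p ∈ s) (hq : q ∈ s) (hk : p k ≠ q k) : s ⊆ hammingLine k p := by
  obtain ⟨k', hpq⟩ := hammingGraph_adj_iff.mp (hs hp hq fun h => hk (congrFun h k))
  obtain rfl : k = k' := (hpq k).mp hk
  intro r hr j hjk
  by_contra hrj
  obtain ⟨j', hrp⟩ := hammingGraph_adj_iff.mp (hs hr hp fun h => hrj (congrFun h j))
  obtain rfl : j = j' := (hrp j).mp hrj
  have hrk : r k = p k := not_not.mp fun h => hjk ((hrp k).mp h).symm
  have hpj : p j = q j := not_not.mp fun h => hjk ((hpq j).mp h)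
  obtain ⟨i, hrq⟩ := hammingGraph_adj_iff.mp (hs hr hq fun h => hk (hrk ▸ congrFun h k))
  exact hjk (((hrq j).mp (hpj ▸ hrj)).trans ((hrq k).mp (hrk ▸ hk)).symm)

lemma IsMaximalClique.eq_hammingLine {s : Set (Fin d → Fin e)}
    (hs : IsMaximalClique (hammingGraph d e) s) {p q : Fin d → Fin e} {k : Fin d}
    (hp : p ∈ s) (hq : q ∈ s) (hk : p k ≠ q k) : s = hammingLine k p :=
  hs.2 _ (hammingLine_isClique k p) (hs.1.subset_hammingLine hp hq hk)

lemma IsMaximalClique.exists_eq_hammingLine (hd : 0 < d) {s : Set (Fin d → Fin e)}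
    (hs : IsMaximalClique (hammingGraph d e) s) {a : Fin d → Fin e} (ha : a ∈ s) :
    ∃ k, s = hammingLine k a := by
  by_cases hex : ∃ p ∈ s, p ≠ a
  · obtain ⟨p, hp, hpa⟩ := hex
    obtain ⟨k, hk⟩ := Function.ne_iff.mp hpa
    exact ⟨k, hs.eq_hammingLine ha hp (Ne.symm hk)⟩
  · push Not at hex
    refine ⟨⟨0, hd⟩, hs.2 _ (hammingLine_isClique _ a) fun p hp => ?_⟩
    rw [hex p hp]
    exact mem_hammingLine_self _ a

lemma IsMaximalClique.eq_of_mem_of_mem {s t : Set (Fin d → Fin e)}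
    (hs : IsMaximalClique (hammingGraph d e) s) (ht : IsMaximalClique (hammingGraph d e) t)
    {p q : Fin d → Fin e} (hps : p ∈ s) (hqs : q ∈ s) (hpt : p ∈ t) (hqt : q ∈ t)
    (hpq : p ≠ q) : s = t := by
  obtain ⟨k, hk⟩ := Function.ne_iff.mp hpq
  rw [hs.eq_hammingLine hps hqs hk, ht.eq_hammingLine hpt hqt hk]

end Hamming

lemma IsMaximalClique.nonempty {V : Type*} [Nonempty V] {G : SimpleGraph V} {s : Set V}
    (hs : IsMaximalClique G s) : s.Nonempty := by
  obtain ⟨a⟩ := ‹Nonempty V›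
  by_contra h
  rw [Set.not_nonempty_iff_eq_empty] at h
  subst h
  exact Set.singleton_ne_empty a (hs.2 {a} (G.isClique_singleton a) (Set.empty_subset _)).symm

section Incidence

variable {d e : ℕ} {R : (Fin d → Fin e) → (Fin d → Fin e) → Prop}

lemma exists_twins_of_rel (hd : 0 < d) (hde : d < e)
    (hrow : ∀ x, IsMaximalClique (hammingGraph d e) {y | R x y})
    (hcol : ∀ y, IsMaximalClique (hammingGraph d e) {x | R x y})
    {x y : Fin d → Fin e} (hxy : R x y) :
    ∃ x₁ x₂, x₁ ≠ x₂ ∧ R x₁ y ∧ R x₂ y ∧ {w | R x₁ w} = {w | R x₂ w} := by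
  obtain ⟨k, hcol_eq⟩ := (hcol y).exists_eq_hammingLine hd hxy
  have hmem : ∀ t, R (update x k t) y := fun t => by
    have : update x k t ∈ hammingLine k x := fun j hj => update_of_ne hj _ _
    rwa [← hcol_eq] at this
  choose dir hdir using fun t => (hrow (update x k t)).exists_eq_hammingLine hd (hmem t)
  obtain ⟨t, u, htu, hdtu⟩ := Fintype.exists_ne_map_eq_of_card_lt dir (by simpa using hde)
  refine ⟨_, _, fun h => htu ?_, hmem t, hmem u, by rw [hdir t, hdir u, hdtu]⟩
  simpa using congrFun h k

lemma rel_difunctional (hd : 0 < d) (hde : d < e)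
    (hrow : ∀ x, IsMaximalClique (hammingGraph d e) {y | R x y})
    (hcol : ∀ y, IsMaximalClique (hammingGraph d e) {x | R x y})
    {x z y w : Fin d → Fin e} (hxy : R x y) (hzy : R z y) (hxw : R x w) : R z w := by
  obtain ⟨x₁, x₂, hne, h₁, h₂, hrow_eq⟩ := exists_twins_of_rel hd hde hrow hcol hxy
  have hcol_eq : ∀ w', R x₁ w' → {z | R z w'} = {z | R z y} := fun w' hw' =>
    (hcol w').eq_of_mem_of_mem (hcol y) hw' (show w' ∈ {w | R x₂ w} from hrow_eq ▸ hw') h₁ h₂ hne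
  have hrow_x : {w | R x₁ w} = {w | R x w} :=
    (hrow x₁).2 _ (hrow x).1 fun w' hw' => show x ∈ {z | R z w'} from hcol_eq w' hw' ▸ hxy
  have hx₁w : R x₁ w := show w ∈ {w | R x₁ w} from hrow_x ▸ hxw
  exact show z ∈ {z | R z w} from (hcol_eq w hx₁w).symm ▸ hzy

end Incidence

lemma SimpleGraph.setOf_reachable_eq_of_difunctional {α β : Type*} {G : SimpleGraph (α ⊕ β)}
    (hα : ∀ x y, ¬ G.Adj (Sum.inl x) (Sum.inl y)) (hβ : ∀ x y, ¬ G.Adj (Sum.inr x) (Sum.inr y))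
    (hdif : ∀ {x z y w}, G.Adj (Sum.inl x) (Sum.inr y) → G.Adj (Sum.inl z) (Sum.inr y) →
      G.Adj (Sum.inl x) (Sum.inr w) → G.Adj (Sum.inl z) (Sum.inr w))
    {x : α} {y : β} (hxy : G.Adj (Sum.inl x) (Sum.inr y)) {v : α ⊕ β}
    (hv : v ∈ Sum.inl '' {z | G.Adj (Sum.inl z) (Sum.inr y)} ∪
      Sum.inr '' {w | G.Adj (Sum.inl x) (Sum.inr w)}) :
    {u | G.Reachable v u} =
      Sum.inl '' {z | G.Adj (Sum.inl z) (Sum.inr y)} ∪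
      Sum.inr '' {w | G.Adj (Sum.inl x) (Sum.inr w)} := by
  set S := Sum.inl '' {z | G.Adj (Sum.inl z) (Sum.inr y)} ∪
    Sum.inr '' {w | G.Adj (Sum.inl x) (Sum.inr w)}
  have hclosed : ∀ a ∈ S, ∀ b, G.Adj a b → b ∈ S := by
    rintro _ (⟨z, hz, rfl⟩ | ⟨w, hw, rfl⟩) (b | b) hab
    · exact absurd hab (hα z b)
    · exact Or.inr ⟨b, hdif hz hxy hab, rfl⟩
    · exact Or.inl ⟨b, hdif hw hab.symm hxy, rfl⟩
    · exact absurd hab (hβ w b)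
  have hreach : ∀ a ∈ S, G.Reachable (Sum.inr y) a := by
    rintro _ (⟨z, hz, rfl⟩ | ⟨w, hw, rfl⟩)
    · exact hz.symm.reachable
    · exact hxy.symm.reachable.trans hw.reachable
  ext u
  refine ⟨fun hu => ?_, fun hu => (hreach v hv).symm.trans (hreach u hu)⟩
  replace hu := (G.reachable_iff_reflTransGen v u).mp hu
  induction hu with
  | refl => exact hv
  | tail _ hbc ih => exact hclosed _ ih _ hbc

theorem hamming_lemma (d e : ℕ) (hd : 0 < d) (hde : d < e)
    (G : SimpleGraph ((Fin d → Fin e) ⊕ (Fin d → Fin e)))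
    (hY : ∀ x y : Fin d → Fin e, ¬ G.Adj (Sum.inl x) (Sum.inl y))
    (hY' : ∀ x y : Fin d → Fin e, ¬ G.Adj (Sum.inr x) (Sum.inr y))
    (hnbrL : ∀ x : Fin d → Fin e,
      IsMaximalClique (hammingGraph d e) {y | G.Adj (Sum.inl x) (Sum.inr y)})
    (hnbrR : ∀ y : Fin d → Fin e,
      IsMaximalClique (hammingGraph d e) {x | G.Adj (Sum.inl x) (Sum.inr y)}) :
    ∀ v : (Fin d → Fin e) ⊕ (Fin d → Fin e),
      ∃ (L L' : Set (Fin d → Fin e)),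
        IsMaximalClique (hammingGraph d e) L ∧
        IsMaximalClique (hammingGraph d e) L' ∧
        {w | G.Reachable v w} = Sum.inl '' L ∪ Sum.inr '' L' ∧
        ∀ y ∈ L, ∀ y' ∈ L', G.Adj (Sum.inl y) (Sum.inr y') := by
  intro v
  have : Nonempty (Fin d → Fin e) := ⟨fun _ => ⟨0, hd.trans hde⟩⟩
  have hdif : ∀ {x z y w}, G.Adj (Sum.inl x) (Sum.inr y) → G.Adj (Sum.inl z) (Sum.inr y) →
      G.Adj (Sum.inl x) (Sum.inr w) → G.Adj (Sum.inl z) (Sum.inr w) :=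
    rel_difunctional hd hde hnbrL hnbrR
  obtain ⟨x, y, hxy, hv⟩ : ∃ x y, G.Adj (Sum.inl x) (Sum.inr y) ∧
      v ∈ Sum.inl '' {z | G.Adj (Sum.inl z) (Sum.inr y)} ∪
        Sum.inr '' {w | G.Adj (Sum.inl x) (Sum.inr w)} := by
    cases v with
    | inl x =>
      obtain ⟨y, hy⟩ := (hnbrL x).nonempty
      exact ⟨x, y, hy, Or.inl ⟨x, hy, rfl⟩⟩
    | inr y =>
      obtain ⟨x, hx⟩ := (hnbrR y).nonempty
      exact ⟨x, y, hx, Or.inr ⟨y, hx, rfl⟩⟩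
  exact ⟨_, _, hnbrR y, hnbrL x, G.setOf_reachable_eq_of_difunctional hY hY' hdif hxy hv,
    fun z hz w hw => hdif hxy hz hw⟩
end
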